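/- arXiv:2512.03410 — 4 statements merged into one kernel-verified Lean document; each statement's English description precedes it below -/
import Mathlib

section
/- Let W ≻ 0 be symmetric, and define ψ(x) = sqrt(min over z in a closed convex set Z of the convex quadratic J(x,z)) where J(x,z) = (x,z)ᵀ M (x,z) with M ⪰ 0 and its bottom-right block H ≻ 0, top-left block W, off-diagonal block G. Then ψ is Lipschitz: |ψ(x) − ψ(y)| ≤ ||x − y||_W, where ||v||_W = sqrt(vᵀWv). -/
open Matrix

/-!
`√(uᵀ M u)` is a seminorm when `M ⪰ 0`, so `z ↦ √J(x, z)` moves by at most `‖x − y‖_W` when `x`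
is replaced by `y`. Since `√` is monotone, `ψ(x)` is the infimum over `Z` of these functions, and an
infimum of a family of functions that all move by at most `c` moves by at most `c`.
-/

theorem Matrix.PosSemidef.sqrt_dotProduct_mulVec_add_le {m : Type*} [Fintype m]
    {M : Matrix m m ℝ} (hM : M.PosSemidef) (u v : m → ℝ) :
    √((u + v) ⬝ᵥ M *ᵥ (u + v)) ≤ √(u ⬝ᵥ M *ᵥ u) + √(v ⬝ᵥ M *ᵥ v) := by
  let E := M.toSeminormedAddCommGroup hM
  have hnorm (w : m → ℝ) : E.norm w = √(w ⬝ᵥ M *ᵥ w) := by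
    change √(RCLike.re ((M *ᵥ w) ⬝ᵥ star w)) = _
    rw [star_trivial, dotProduct_comm]
    rfl
  simpa only [hnorm] using @norm_add_le _ E.toSeminormedAddGroup u v

theorem Matrix.sqrt_sumElim_dotProduct_fromBlocks_mulVec_le {l m : Type*} [Fintype l] [Fintype m]
    {A : Matrix l l ℝ} {B : Matrix l m ℝ} {C : Matrix m l ℝ} {D : Matrix m m ℝ}
    (hM : (fromBlocks A B C D).PosSemidef) (x y : l → ℝ) (z : m → ℝ) :
    √(Sum.elim x z ⬝ᵥ fromBlocks A B C D *ᵥ Sum.elim x z) ≤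
      √(Sum.elim y z ⬝ᵥ fromBlocks A B C D *ᵥ Sum.elim y z) + √((x - y) ⬝ᵥ A *ᵥ (x - y)) := by
  have hsplit : Sum.elim x z = Sum.elim y z + Sum.elim (x - y) 0 := by
    ext (i | i) <;> simp
  have hblock : Sum.elim (x - y) 0 ⬝ᵥ fromBlocks A B C D *ᵥ Sum.elim (x - y) 0 =
      (x - y) ⬝ᵥ A *ᵥ (x - y) := by
    simp [fromBlocks_mulVec, sumElim_dotProduct_sumElim]
  rw [hsplit, ← hblock]
  exact hM.sqrt_dotProduct_mulVec_add_le _ _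

theorem Real.sqrt_sInf_image_le_sqrt_sInf_image_add {α : Type*} {s : Set α} (hs : s.Nonempty)
    {f g : α → ℝ} (hf : BddBelow (f '' s)) {c : ℝ} (h : ∀ a ∈ s, √(f a) ≤ √(g a) + c) :
    √(sInf (f '' s)) ≤ √(sInf (g '' s)) + c := by
  rcases le_or_gt (√(sInf (f '' s)) - c) 0 with hle | hpos
  · linarith [Real.sqrt_nonneg (sInf (g '' s))]
  have hsq : (√(sInf (f '' s)) - c) ^ 2 ≤ sInf (g '' s) := by
    refine le_csInf (hs.image g) ?_
    rintro _ ⟨a, ha, rfl⟩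
    refine (Real.le_sqrt' hpos).mp ?_
    have := Real.sqrt_le_sqrt (csInf_le hf (Set.mem_image_of_mem f ha))
    linarith [h a ha]
  have := Real.sqrt_le_sqrt hsq
  rw [Real.sqrt_sq hpos.le] at this
  linarith

theorem stmt8_general {n p : ℕ} (W : Matrix (Fin n) (Fin n) ℝ) (G : Matrix (Fin p) (Fin n) ℝ)
    (H : Matrix (Fin p) (Fin p) ℝ)
    (hM : (Matrix.fromBlocks W Gᵀ G H).PosSemidef)
    (Z : Set (Fin p → ℝ)) (hZne : Z.Nonempty)
    (J : (Fin n → ℝ) → (Fin p → ℝ) → ℝ)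
    (hJ : ∀ x z, J x z =
      (Sum.elim x z) ⬝ᵥ (Matrix.fromBlocks W Gᵀ G H).mulVec (Sum.elim x z))
    (ψ : (Fin n → ℝ) → ℝ)
    (hψ : ∀ x, ψ x = Real.sqrt (sInf {r : ℝ | ∃ z ∈ Z, r = J x z})) :
    ∀ x y : Fin n → ℝ, |ψ x - ψ y| ≤ Real.sqrt ((x - y) ⬝ᵥ W.mulVec (x - y)) := by
  have hψ_image : ∀ x, ψ x = √(sInf (J x '' Z)) := fun x => by
    simp only [hψ, Set.image, eq_comm]
  have hψ_le : ∀ x y, ψ x ≤ ψ y + √((x - y) ⬝ᵥ W *ᵥ (x - y)) := fun x y => by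
    rw [hψ_image, hψ_image]
    refine Real.sqrt_sInf_image_le_sqrt_sInf_image_add hZne ⟨0, ?_⟩ fun z _ => ?_
    · rintro _ ⟨z, -, rfl⟩
      simpa [hJ] using hM.dotProduct_mulVec_nonneg (Sum.elim x z)
    · simpa only [hJ] using sqrt_sumElim_dotProduct_fromBlocks_mulVec_le hM x y z
  intro x y
  have hsymm : (y - x) ⬝ᵥ W *ᵥ (y - x) = (x - y) ⬝ᵥ W *ᵥ (x - y) := by
    rw [← neg_sub, mulVec_neg, neg_dotProduct, dotProduct_neg, neg_neg]
  have hψ_ge := hψ_le y x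
  rw [hsymm] at hψ_ge
  rw [abs_sub_le_iff]
  exact ⟨by linarith [hψ_le x y], by linarith⟩

/-- The square root `ψ` of the optimal value of the parametric convex QP
`min_{z ∈ Z} (x,z)ᵀ M (x,z)` with `M = [[W, Gᵀ],[G, H]] ⪰ 0`, `W ≻ 0`, `H ≻ 0`,
is Lipschitz in the `W`-norm: `|ψ(x) − ψ(y)| ≤ ‖x − y‖_W`. -/
theorem stmt8 {n p : ℕ} (W : Matrix (Fin n) (Fin n) ℝ) (G : Matrix (Fin p) (Fin n) ℝ)
    (H : Matrix (Fin p) (Fin p) ℝ)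
    (hW : W.PosDef) (hH : H.PosDef)
    (hM : (Matrix.fromBlocks W Gᵀ G H).PosSemidef)
    (Z : Set (Fin p → ℝ)) (hZne : Z.Nonempty) (hZcl : IsClosed Z) (hZcvx : Convex ℝ Z)
    (J : (Fin n → ℝ) → (Fin p → ℝ) → ℝ)
    (hJ : ∀ x z, J x z =
      (Sum.elim x z) ⬝ᵥ (Matrix.fromBlocks W Gᵀ G H).mulVec (Sum.elim x z))
    (ψ : (Fin n → ℝ) → ℝ)
    (hψ : ∀ x, ψ x = Real.sqrt (sInf {r : ℝ | ∃ z ∈ Z, r = J x z})) :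
    ∀ x y : Fin n → ℝ, |ψ x - ψ y| ≤ Real.sqrt ((x - y) ⬝ᵥ W.mulVec (x - y)) :=
  stmt8_general W G H hM Z hZne J hJ ψ hψ
end

section
/- With the same parametric QP setup, the solution mapping z*(x) = argmin_{z∈Z} J(x,z) satisfies the monotonicity property ⟨z*(x) − z*(y), G(x − y)⟩ ≤ −||z*(x) − z*(y)||²_H, for all x, y. -/
open Matrix Filter Topology

/- The minimality of `z*(x)` tested along the segment from `z*(x)` to any `z ∈ Z` gives the
first-order condition `⟨z − z*(x), 2Gx + (H + Hᵀ)z*(x)⟩ ≥ 0`.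
Adding this condition at `x` (tested with `z*(y)`) to the one at `y` (tested with `z*(x)`) makes
the `H`-terms collapse to `−‖z*(x) − z*(y)‖²_H`, because `vᵀHᵀv = vᵀHv`. -/

theorem nonneg_of_forall_mul_add_sq_mul_nonneg {a b : ℝ}
    (h : ∀ t : ℝ, 0 < t → t ≤ 1 → 0 ≤ t * a + t ^ 2 * b) : 0 ≤ a := by
  have hlim : Tendsto (fun t : ℝ => a + t * b) (𝓝[>] 0) (𝓝 a) := by
    refine tendsto_nhdsWithin_of_tendsto_nhds ?_
    simpa using (show Continuous fun t : ℝ => a + t * b by fun_prop).tendsto 0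
  refine ge_of_tendsto hlim ?_
  filter_upwards [Ioc_mem_nhdsGT zero_lt_one] with t ⟨ht0, ht1⟩
  exact nonneg_of_mul_nonneg_right (by linarith [h t ht0 ht1]) ht0

theorem add_smul_dotProduct_mulVec_add_smul {ι R : Type*} [Fintype ι] [CommRing R]
    (M : Matrix ι ι R) (a b : ι → R) (t : R) :
    (a + t • b) ⬝ᵥ M *ᵥ (a + t • b) =
      a ⬝ᵥ M *ᵥ a + t * (b ⬝ᵥ (M + Mᵀ) *ᵥ a) + t ^ 2 * (b ⬝ᵥ M *ᵥ b) := by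
  simp only [mulVec_add, mulVec_smul, add_mulVec, dotProduct_add, add_dotProduct,
    dotProduct_smul, smul_dotProduct, dotProduct_transpose_mulVec, smul_eq_mul]
  ring

theorem convex_image_sumElim {ι κ : Type*} (x : ι → ℝ) {Z : Set (κ → ℝ)} (hZ : Convex ℝ Z) :
    Convex ℝ (Sum.elim x '' Z) := by
  rintro _ ⟨z, hz, rfl⟩ _ ⟨w, hw, rfl⟩ a b ha hb hab
  refine ⟨a • z + b • w, hZ hz hw ha hb hab, ?_⟩
  ext (i | i)
  · simp [← add_mul, hab]
  · simp

theorem IsMinOn.dotProduct_add_transpose_mulVec_nonneg {ι : Type*} [Fintype ι]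
    {M : Matrix ι ι ℝ} {S : Set (ι → ℝ)} (hS : Convex ℝ S) {a b : ι → ℝ}
    (hmin : IsMinOn (fun v => v ⬝ᵥ M *ᵥ v) S a) (ha : a ∈ S) (hb : b ∈ S) :
    0 ≤ (b - a) ⬝ᵥ (M + Mᵀ) *ᵥ a := by
  refine nonneg_of_forall_mul_add_sq_mul_nonneg (b := (b - a) ⬝ᵥ M *ᵥ (b - a)) fun t ht0 ht1 => ?_
  have hle : a ⬝ᵥ M *ᵥ a ≤ (a + t • (b - a)) ⬝ᵥ M *ᵥ (a + t • (b - a)) :=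
    hmin (hS.add_smul_sub_mem ha hb ⟨ht0.le, ht1⟩)
  rw [add_smul_dotProduct_mulVec_add_smul] at hle
  linarith

theorem IsMinOn.variational_inequality_fromBlocks {ι κ : Type*} [Fintype ι] [Fintype κ]
    {W : Matrix ι ι ℝ} {G : Matrix κ ι ℝ} {H : Matrix κ κ ℝ} {Z : Set (κ → ℝ)}
    (hZ : Convex ℝ Z) {x : ι → ℝ} {u z : κ → ℝ}
    (hmin : IsMinOn (fun w => Sum.elim x w ⬝ᵥ fromBlocks W Gᵀ G H *ᵥ Sum.elim x w) Z u)
    (hu : u ∈ Z) (hz : z ∈ Z) :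
    0 ≤ (z - u) ⬝ᵥ ((G + G) *ᵥ x + (H + Hᵀ) *ᵥ u) := by
  have hmin' : IsMinOn (fun v => v ⬝ᵥ fromBlocks W Gᵀ G H *ᵥ v) (Sum.elim x '' Z)
      (Sum.elim x u) := by
    rintro _ ⟨w, hw, rfl⟩
    exact hmin hw
  have hfirst := hmin'.dotProduct_add_transpose_mulVec_nonneg (convex_image_sumElim x hZ)
    ⟨u, hu, rfl⟩ ⟨z, hz, rfl⟩
  simp only [fromBlocks_transpose, transpose_transpose, fromBlocks_add, fromBlocks_mulVec,
    Sum.elim_comp_inl, Sum.elim_comp_inr, sub_dotProduct, sumElim_dotProduct_sumElim,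
    dotProduct_add, add_sub_add_left_eq_sub, sub_nonneg] at hfirst
  simp only [dotProduct_add, sub_dotProduct]
  linarith

theorem stmt9_general {n p : ℕ} (W : Matrix (Fin n) (Fin n) ℝ) (G : Matrix (Fin p) (Fin n) ℝ)
    (H : Matrix (Fin p) (Fin p) ℝ)
    (Z : Set (Fin p → ℝ)) (hZcvx : Convex ℝ Z)
    (J : (Fin n → ℝ) → (Fin p → ℝ) → ℝ)
    (hJ : ∀ x z, J x z =
      (Sum.elim x z) ⬝ᵥ (Matrix.fromBlocks W Gᵀ G H).mulVec (Sum.elim x z))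
    (zstar : (Fin n → ℝ) → (Fin p → ℝ))
    (hzstar : ∀ x, zstar x ∈ Z ∧ ∀ z ∈ Z, J x (zstar x) ≤ J x z) :
    ∀ x y : Fin n → ℝ,
      (zstar x - zstar y) ⬝ᵥ G.mulVec (x - y)
        ≤ -((zstar x - zstar y) ⬝ᵥ H.mulVec (zstar x - zstar y)) := by
  have hmin : ∀ x, IsMinOn (fun w => Sum.elim x w ⬝ᵥ fromBlocks W Gᵀ G H *ᵥ Sum.elim x w) Z
      (zstar x) := fun x w hw => by
    have hle := (hzstar x).2 w hw
    rwa [hJ, hJ] at hle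
  intro x y
  have hx := (hmin x).variational_inequality_fromBlocks hZcvx (hzstar x).1 (hzstar y).1
  have hy := (hmin y).variational_inequality_fromBlocks hZcvx (hzstar y).1 (hzstar x).1
  have hHT := dotProduct_transpose_mulVec H (zstar x - zstar y) (zstar x - zstar y)
  simp only [add_mulVec, mulVec_sub, dotProduct_add, sub_dotProduct, dotProduct_sub] at hx hy hHT ⊢
  linarith

/-- The solution map `z*(x)` of the parametric QP satisfies the monotonicity property
`⟨z*(x) − z*(y), G(x − y)⟩ ≤ −‖z*(x) − z*(y)‖²_H`. -/
theorem stmt9 {n p : ℕ} (W : Matrix (Fin n) (Fin n) ℝ) (G : Matrix (Fin p) (Fin n) ℝ)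
    (H : Matrix (Fin p) (Fin p) ℝ)
    (hW : W.PosDef) (hH : H.PosDef)
    (hM : (Matrix.fromBlocks W Gᵀ G H).PosSemidef)
    (Z : Set (Fin p → ℝ)) (hZne : Z.Nonempty) (hZcl : IsClosed Z) (hZcvx : Convex ℝ Z)
    (J : (Fin n → ℝ) → (Fin p → ℝ) → ℝ)
    (hJ : ∀ x z, J x z =
      (Sum.elim x z) ⬝ᵥ (Matrix.fromBlocks W Gᵀ G H).mulVec (Sum.elim x z))
    (zstar : (Fin n → ℝ) → (Fin p → ℝ))
    (hzstar : ∀ x, zstar x ∈ Z ∧ ∀ z ∈ Z, J x (zstar x) ≤ J x z) :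
    ∀ x y : Fin n → ℝ,
      (zstar x - zstar y) ⬝ᵥ G.mulVec (x - y)
        ≤ -((zstar x - zstar y) ⬝ᵥ H.mulVec (zstar x - zstar y)) :=
  stmt9_general W G H Z hZcvx J hJ zstar hzstar
end

section
/- With the same parametric QP setup, the solution mapping is Lipschitz in weighted norms: ||z*(x) − z*(y)||_H ≤ ||G(x − y)||_{H⁻¹} for all x, y, where ||v||_H = sqrt(vᵀHv) and ||w||_{H⁻¹} = sqrt(wᵀH⁻¹w). -/
/-!
Up to a constant in `x`, `J x` is the quadratic `z ↦ zᵀHz + 2 zᵀ(Gx)`, so `z*(x)` satisfies the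
first-order condition `⟨z − z*(x), H z*(x) + Gx⟩ ≥ 0` on the convex set `Z`. Adding the conditions
at `x` and `y` gives `‖z*(x) − z*(y)‖²_H ≤ −⟨z*(x) − z*(y), G(x − y)⟩`, and Cauchy–Schwarz in the
`H`-inner product bounds the right side by `‖z*(x) − z*(y)‖_H ‖G(x − y)‖_{H⁻¹}`.
-/

open Matrix Filter Topology

section QuadraticForm

variable {ι : Type*} [Fintype ι] {H : Matrix ι ι ℝ}

theorem Matrix.IsSymm.dotProduct_mulVec_comm (hH : H.IsSymm) (u v : ι → ℝ) :
    u ⬝ᵥ H *ᵥ v = v ⬝ᵥ H *ᵥ u := by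
  rw [dotProduct_mulVec, ← mulVec_transpose, hH.eq, dotProduct_comm]

theorem Matrix.PosSemidef.sq_dotProduct_mulVec_le (hH : H.PosSemidef) (u v : ι → ℝ) :
    (u ⬝ᵥ H *ᵥ v) ^ 2 ≤ (u ⬝ᵥ H *ᵥ u) * (v ⬝ᵥ H *ᵥ v) := by
  let := H.toSeminormedAddCommGroup hH
  let := H.toInnerProductSpace hH
  have hinner : ∀ a b : ι → ℝ, inner ℝ a b = a ⬝ᵥ H *ᵥ b := fun a b => by
    rw [dotProduct_comm]; rfl
  simpa only [hinner, sq] using real_inner_mul_inner_self_le u v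

theorem Matrix.PosDef.sq_dotProduct_le [DecidableEq ι] (hH : H.PosDef) (u g : ι → ℝ) :
    (u ⬝ᵥ g) ^ 2 ≤ (u ⬝ᵥ H *ᵥ u) * (g ⬝ᵥ H⁻¹ *ᵥ g) := by
  have hHinv : H *ᵥ (H⁻¹ *ᵥ g) = g := by
    rw [mulVec_mulVec, mul_nonsing_inv H hH.det_pos.ne'.isUnit, one_mulVec]
  simpa only [hHinv, dotProduct_comm (H⁻¹ *ᵥ g)] using
    hH.posSemidef.sq_dotProduct_mulVec_le u (H⁻¹ *ᵥ g)

end QuadraticForm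

theorem nonneg_of_forall_sq_mul_add_mul_nonneg {a b : ℝ}
    (h : ∀ t : ℝ, 0 < t → t ≤ 1 → 0 ≤ t ^ 2 * a + t * b) : 0 ≤ b := by
  have hlim : Tendsto (fun t : ℝ => t * a + b) (𝓝[>] 0) (𝓝 b) := by
    refine tendsto_nhdsWithin_of_tendsto_nhds ?_
    exact ((continuous_id.mul continuous_const).add continuous_const).tendsto' 0 b (by simp)
  refine ge_of_tendsto hlim ?_
  filter_upwards [Ioo_mem_nhdsGT zero_lt_one] with t ⟨ht0, ht1⟩
  have := h t ht0 ht1.le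
  exact (mul_nonneg_iff_of_pos_left ht0).mp (by linarith)

theorem sumElim_dotProduct_fromBlocks_transpose_mulVec {R m n : Type*} [CommRing R]
    [Fintype m] [Fintype n] (A : Matrix m m R) (B : Matrix n m R) (D : Matrix n n R)
    (x : m → R) (z : n → R) :
    Sum.elim x z ⬝ᵥ fromBlocks A Bᵀ B D *ᵥ Sum.elim x z =
      x ⬝ᵥ A *ᵥ x + (z ⬝ᵥ D *ᵥ z + 2 * (z ⬝ᵥ B *ᵥ x)) := by
  rw [fromBlocks_mulVec, sumElim_dotProduct_sumElim, dotProduct_add, dotProduct_add,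
    dotProduct_mulVec x Bᵀ, vecMul_transpose]
  simp only [Sum.elim_comp_inl, Sum.elim_comp_inr]
  rw [dotProduct_comm (B *ᵥ x) z]
  ring

section QuadraticProgram

variable {ι : Type*} [Fintype ι]

def qpObjective (H : Matrix ι ι ℝ) (c z : ι → ℝ) : ℝ := z ⬝ᵥ H *ᵥ z + 2 * (z ⬝ᵥ c)

variable {H : Matrix ι ι ℝ} {Z : Set (ι → ℝ)} {c c₁ c₂ z z₀ z₁ z₂ : ι → ℝ}

theorem Matrix.IsSymm.qpObjective_add_smul (hH : H.IsSymm) (c z d : ι → ℝ) (t : ℝ) :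
    qpObjective H c (z + t • d) =
      qpObjective H c z + t ^ 2 * (d ⬝ᵥ H *ᵥ d) + t * (2 * (d ⬝ᵥ (H *ᵥ z + c))) := by
  simp only [qpObjective, mulVec_add, mulVec_smul, dotProduct_add, add_dotProduct,
    dotProduct_smul, smul_dotProduct, smul_eq_mul, hH.dotProduct_mulVec_comm z d]
  ring

theorem IsMinOn.qpObjective_variational_inequality (hH : H.IsSymm) (hZ : Convex ℝ Z)
    (hz₀ : z₀ ∈ Z) (hmin : IsMinOn (qpObjective H c) Z z₀) (hz : z ∈ Z) :
    0 ≤ (z - z₀) ⬝ᵥ (H *ᵥ z₀ + c) := by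
  suffices 0 ≤ 2 * ((z - z₀) ⬝ᵥ (H *ᵥ z₀ + c)) by linarith
  refine nonneg_of_forall_sq_mul_add_mul_nonneg (a := (z - z₀) ⬝ᵥ H *ᵥ (z - z₀))
    fun t ht0 ht1 => ?_
  have hmem : z₀ + t • (z - z₀) ∈ Z := hZ.add_smul_sub_mem hz₀ hz ⟨ht0.le, ht1⟩
  have : qpObjective H c z₀ ≤ qpObjective H c (z₀ + t • (z - z₀)) := hmin hmem
  rw [hH.qpObjective_add_smul] at this
  linarith

theorem qpObjective_solutions_monotone (hH : H.IsSymm) (hZ : Convex ℝ Z)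
    (hz₁ : z₁ ∈ Z) (hmin₁ : IsMinOn (qpObjective H c₁) Z z₁)
    (hz₂ : z₂ ∈ Z) (hmin₂ : IsMinOn (qpObjective H c₂) Z z₂) :
    (z₁ - z₂) ⬝ᵥ H *ᵥ (z₁ - z₂) ≤ -((z₁ - z₂) ⬝ᵥ (c₁ - c₂)) := by
  have h₁ := hmin₁.qpObjective_variational_inequality hH hZ hz₁ hz₂
  have h₂ := hmin₂.qpObjective_variational_inequality hH hZ hz₂ hz₁
  rw [← neg_sub, neg_dotProduct] at h₁
  simp only [mulVec_sub, dotProduct_sub, dotProduct_add] at h₁ h₂ ⊢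
  linarith

theorem qpObjective_solutions_lipschitz [DecidableEq ι] (hH : H.PosDef) (hZ : Convex ℝ Z)
    (hz₁ : z₁ ∈ Z) (hmin₁ : IsMinOn (qpObjective H c₁) Z z₁)
    (hz₂ : z₂ ∈ Z) (hmin₂ : IsMinOn (qpObjective H c₂) Z z₂) :
    (z₁ - z₂) ⬝ᵥ H *ᵥ (z₁ - z₂) ≤ (c₁ - c₂) ⬝ᵥ H⁻¹ *ᵥ (c₁ - c₂) := by
  have hmono := qpObjective_solutions_monotone (isHermitian_iff_isSymm.mp hH.isHermitian) hZ
    hz₁ hmin₁ hz₂ hmin₂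
  have hcs := hH.sq_dotProduct_le (z₁ - z₂) (c₁ - c₂)
  have ha : 0 ≤ (z₁ - z₂) ⬝ᵥ H *ᵥ (z₁ - z₂) := hH.posSemidef.dotProduct_mulVec_nonneg _
  have hc : 0 ≤ (c₁ - c₂) ⬝ᵥ H⁻¹ *ᵥ (c₁ - c₂) := hH.inv.posSemidef.dotProduct_mulVec_nonneg _
  nlinarith

end QuadraticProgram

theorem stmt10_general {n p : ℕ} (W : Matrix (Fin n) (Fin n) ℝ) (G : Matrix (Fin p) (Fin n) ℝ)
    (H : Matrix (Fin p) (Fin p) ℝ)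
    (hH : H.PosDef)
    (Z : Set (Fin p → ℝ)) (hZcvx : Convex ℝ Z)
    (J : (Fin n → ℝ) → (Fin p → ℝ) → ℝ)
    (hJ : ∀ x z, J x z =
      (Sum.elim x z) ⬝ᵥ (Matrix.fromBlocks W Gᵀ G H).mulVec (Sum.elim x z))
    (zstar : (Fin n → ℝ) → (Fin p → ℝ))
    (hzstar : ∀ x, zstar x ∈ Z ∧ ∀ z ∈ Z, J x (zstar x) ≤ J x z) :
    ∀ x y : Fin n → ℝ,
      Real.sqrt ((zstar x - zstar y) ⬝ᵥ H.mulVec (zstar x - zstar y))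
        ≤ Real.sqrt ((G.mulVec (x - y)) ⬝ᵥ H⁻¹.mulVec (G.mulVec (x - y))) := by
  have hmin : ∀ x, IsMinOn (qpObjective H (G *ᵥ x)) Z (zstar x) := fun x z hz => by
    have hle := (hzstar x).2 z hz
    simp only [hJ, sumElim_dotProduct_fromBlocks_transpose_mulVec, add_le_add_iff_left] at hle
    exact hle
  intro x y
  apply Real.sqrt_le_sqrt
  simpa only [← mulVec_sub] using
    qpObjective_solutions_lipschitz hH hZcvx (hzstar x).1 (hmin x) (hzstar y).1 (hmin y)

/-- The solution map `z*(x)` of the parametric QP is Lipschitz in weighted norms: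
`‖z*(x) − z*(y)‖_H ≤ ‖G(x − y)‖_{H⁻¹}`. -/
theorem stmt10 {n p : ℕ} (W : Matrix (Fin n) (Fin n) ℝ) (G : Matrix (Fin p) (Fin n) ℝ)
    (H : Matrix (Fin p) (Fin p) ℝ)
    (hW : W.PosDef) (hH : H.PosDef)
    (hM : (Matrix.fromBlocks W Gᵀ G H).PosSemidef)
    (Z : Set (Fin p → ℝ)) (hZne : Z.Nonempty) (hZcl : IsClosed Z) (hZcvx : Convex ℝ Z)
    (J : (Fin n → ℝ) → (Fin p → ℝ) → ℝ)
    (hJ : ∀ x z, J x z =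
      (Sum.elim x z) ⬝ᵥ (Matrix.fromBlocks W Gᵀ G H).mulVec (Sum.elim x z))
    (zstar : (Fin n → ℝ) → (Fin p → ℝ))
    (hzstar : ∀ x, zstar x ∈ Z ∧ ∀ z ∈ Z, J x (zstar x) ≤ J x z) :
    ∀ x y : Fin n → ℝ,
      Real.sqrt ((zstar x - zstar y) ⬝ᵥ H.mulVec (zstar x - zstar y))
        ≤ Real.sqrt ((G.mulVec (x - y)) ⬝ᵥ H⁻¹.mulVec (G.mulVec (x - y))) :=
  stmt10_general W G H hH Z hZcvx J hJ zstar hzstar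
end

section
/- Let V: ℝⁿ → ℝ≥0 and suppose for state x there exists a feasible input sequence z with cost L(z) = Σ stage costs and terminal state in the interior of Ω (so F(ξ_N) ≤ ρα for some ρ < 1). Then choosing ω ≥ max(ε, (L(z) − Nγ)/((1−ρ)α)) ensures L(z) + ω·F(ξ_N) ≤ Nγ + ωα; i.e., x lies in the backward reachable set estimate Υ_N(ω) = {x : V_N(x) ≤ Nγ + ωα}. -/
theorem add_mul_le_add_mul_of_le_mul_sub {L c ω F ρ α : ℝ} (hω : 0 ≤ ω) (hF : F ≤ ρ * α)
    (hmargin : L - c ≤ ω * ((1 - ρ) * α)) :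
    L + ω * F ≤ c + ω * α :=
  calc L + ω * F ≤ L + ω * (ρ * α) := by gcongr
    _ ≤ c + ω * α := by linarith

theorem stmt16_general (N : ℕ) (L γ ε α ρ ω FxiN V : ℝ)
    (hε : 0 < ε) (hα : 0 < α)
    (hρ1 : ρ < 1)
    (hFle : FxiN ≤ ρ * α)
    (hω : max ε ((L - N * γ) / ((1 - ρ) * α)) ≤ ω)
    (hV : V ≤ L + ω * FxiN) :
    L + ω * FxiN ≤ N * γ + ω * α ∧ V ≤ N * γ + ω * α := by
  obtain ⟨hεω, hquot⟩ := max_le_iff.mp hω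
  have hmargin : L - N * γ ≤ ω * ((1 - ρ) * α) :=
    (div_le_iff₀ (mul_pos (sub_pos.mpr hρ1) hα)).mp hquot
  have hcost := add_mul_le_add_mul_of_le_mul_sub (hε.trans_le hεω).le hFle hmargin
  exact ⟨hcost, hV.trans hcost⟩

/-- Theorem 1 / equation (7): if a feasible sequence has stage cost `L` and terminal value
`F(ξ_N) ≤ ρα` with `ρ < 1`, then `ω ≥ max(ε, (L − Nγ)/((1−ρ)α))` guarantees
`L + ω F(ξ_N) ≤ Nγ + ωα`, hence `V_N(x) ≤ Nγ + ωα`, i.e. `x ∈ Υ_N(ω)`. -/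
theorem stmt16 (N : ℕ) (hN : 1 ≤ N) (L γ ε α ρ ω FxiN V : ℝ)
    (hL : 0 ≤ L) (hγ : 0 < γ) (hε : 0 < ε) (hα : 0 < α)
    (hρ0 : 0 < ρ) (hρ1 : ρ < 1)
    (hFnn : 0 ≤ FxiN) (hFle : FxiN ≤ ρ * α)
    (hω : max ε ((L - N * γ) / ((1 - ρ) * α)) ≤ ω)
    (hV : V ≤ L + ω * FxiN) :
    L + ω * FxiN ≤ N * γ + ω * α ∧ V ≤ N * γ + ω * α :=
  stmt16_general N L γ ε α ρ ω FxiN V hε hα hρ1 hFle hω hV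
end
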